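/- There exists a constant κ ∈ (0,∞), depending only on L and k, such that for all r, r̃ ∈ 𝒮, all j ∈ ℕ₀, and all integers i₁, i₂ with 0 ≤ i₁ ≤ k−1 and 1 ≤ i₂ ≤ L−i₁, one has (R_{j,i₁,i₂}(r,r̃))² ≤ κ · ( (r_j − r̃_j)² + (j+1) · r̃_j · ‖r − r̃‖₂² ). -/

import Mathlib

noncomputable section

open scoped BigOperators

/-- Tail sum `Σ_{m=j+1}^∞ r m`. -/
def tsumTail (r : ℕ → ℝ) (j : ℕ) : ℝ := ∑' m : ℕ, r (j + 1 + m)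

/-- Membership in `𝒮`: nonnegative summable sequences with total mass 1. -/
def memS (r : ℕ → ℝ) : Prop := (∀ j, 0 ≤ r j) ∧ Summable r ∧ ∑' j, r j = 1

/-- The quantity `R_{j,i₁,i₂}(r, r̃)`. -/
def Rfun (L : ℕ) (j i₁ i₂ : ℕ) (r rt : ℕ → ℝ) : ℝ :=
  (∑ m ∈ Finset.range j, r m) ^ i₁ * (tsumTail r j) ^ (L - i₁ - i₂) * (r j) ^ i₂
    - (∑ m ∈ Finset.range j, rt m) ^ i₁ * (tsumTail rt j) ^ (L - i₁ - i₂) * (rt j) ^ i₂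

/-- `|x^n − y^n| ≤ n|x−y|` for `x, y ∈ [0,1]`. -/
lemma abs_pow_sub_pow_le' (n : ℕ) {x y : ℝ} (hx0 : 0 ≤ x) (hx1 : x ≤ 1)
    (hy0 : 0 ≤ y) (hy1 : y ≤ 1) : |x ^ n - y ^ n| ≤ n * |x - y| := by
  induction n with
  | zero => simp
  | succ n ih =>
    have h1 : x ^ (n + 1) - y ^ (n + 1) = x * (x ^ n - y ^ n) + (x - y) * y ^ n := by ring
    have h2 : |x * (x ^ n - y ^ n)| ≤ |x ^ n - y ^ n| := by
      rw [abs_mul, abs_of_nonneg hx0]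
      nlinarith [abs_nonneg (x ^ n - y ^ n)]
    have h3 : |(x - y) * y ^ n| ≤ |x - y| := by
      rw [abs_mul, abs_of_nonneg (pow_nonneg hy0 n)]
      nlinarith [abs_nonneg (x - y), pow_le_one₀ hy0 hy1 (n := n), pow_nonneg hy0 n]
    calc |x ^ (n + 1) - y ^ (n + 1)| ≤ |x * (x ^ n - y ^ n)| + |(x - y) * y ^ n| := by
          rw [h1]; exact abs_add_le _ _
      _ ≤ n * |x - y| + |x - y| := by linarith [h2.trans ih]
      _ = (n + 1 : ℕ) * |x - y| := by push_cast; ring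

lemma tsumTail_eq (r : ℕ → ℝ) (h : Summable r) (htot : ∑' m, r m = 1) (j : ℕ) :
    tsumTail r j = 1 - ∑ m ∈ Finset.range (j + 1), r m := by
  have key := Summable.sum_add_tsum_nat_add (f := r) (j + 1) h
  have h2 : tsumTail r j = ∑' m, r (m + (j + 1)) :=
    tsum_congr fun m => by rw [Nat.add_comm]
  rw [h2]; rw [htot] at key; linarith


/-- Core numeric inequality. -/
lemma core_ineq {u v w W : ℝ} (hu : 0 ≤ u) (hv : 0 ≤ v) (hw0 : 0 ≤ w) (hw1 : w ≤ 1)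
    (hW : 0 ≤ W) (hvW : v ^ 2 ≤ W) :
    (u + w * (2 * v + u)) ^ 2 ≤ 8 * (u ^ 2 + w * W) := by
  nlinarith [mul_nonneg hw0 (sq_nonneg (u - v)),
    mul_nonneg (mul_nonneg (sub_nonneg.mpr hw1) hw0) (mul_nonneg hu hv),
    mul_nonneg (mul_nonneg (sub_nonneg.mpr hw1) (by linarith : (0:ℝ) ≤ 7 + w)) (sq_nonneg u),
    mul_nonneg (mul_nonneg (sub_nonneg.mpr hw1) hw0) (sq_nonneg v),
    mul_nonneg hw0 (sub_nonneg.mpr hvW)]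

/-- there is `κ ∈ (0,∞)`, depending only on `L` and `k`, such that for all
`r, r̃ ∈ 𝒮`, all `j`, and all `0 ≤ i₁ ≤ k−1`, `1 ≤ i₂ ≤ L−i₁`,
`(R_{j,i₁,i₂}(r,r̃))² ≤ κ((r_j − r̃_j)² + (j+1)·r̃_j·‖r − r̃‖₂²)`. -/
theorem Rfun_l2_bound (L k : ℕ) (hL : 1 ≤ L) (hk : 1 ≤ k) (hkL : k ≤ L) :
    ∃ κ : ℝ, 0 < κ ∧ ∀ r rt : ℕ → ℝ, memS r → memS rt → ∀ j i₁ i₂ : ℕ,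
      i₁ < k → 1 ≤ i₂ → i₂ ≤ L - i₁ →
      (Rfun L j i₁ i₂ r rt) ^ 2
        ≤ κ * ((r j - rt j) ^ 2 + ((j : ℝ) + 1) * rt j * ∑' m, (r m - rt m) ^ 2) := by
  have hL' : (1 : ℝ) ≤ L := by exact_mod_cast hL
  refine ⟨8 * (L : ℝ) ^ 2, by positivity, ?_⟩
  intro r rt hr hrt j i₁ i₂ hi₁ hi₂1 hi₂L
  obtain ⟨hr0, hrsum, hrtot⟩ := hr
  obtain ⟨ht0, htsum, httot⟩ := hrt
  set c := L - i₁ - i₂ with hc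
  set A := ∑ m ∈ Finset.range j, r m with hA
  set At := ∑ m ∈ Finset.range j, rt m with hAt
  set T := tsumTail r j with hT
  set Tt := tsumTail rt j with hTt
  set a := r j with ha
  set at' := rt j with hat'
  -- basic bounds
  have hrle : ∀ m, r m ≤ 1 := fun m => by
    have := Summable.le_tsum hrsum m (fun n _ => hr0 n); rw [hrtot] at this; exact this
  have htle : ∀ m, rt m ≤ 1 := fun m => by
    have := Summable.le_tsum htsum m (fun n _ => ht0 n); rw [httot] at this; exact this
  have hA0 : 0 ≤ A := Finset.sum_nonneg fun m _ => hr0 m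
  have hAt0 : 0 ≤ At := Finset.sum_nonneg fun m _ => ht0 m
  have hA1 : A ≤ 1 := by
    have := Summable.sum_le_tsum (Finset.range j) (fun m _ => hr0 m) hrsum
    rw [hrtot] at this; exact this
  have hAt1 : At ≤ 1 := by
    have := Summable.sum_le_tsum (Finset.range j) (fun m _ => ht0 m) htsum
    rw [httot] at this; exact this
  have ha0 : 0 ≤ a := hr0 j
  have ha1 : a ≤ 1 := hrle j
  have hat0 : 0 ≤ at' := ht0 j
  have hat1 : at' ≤ 1 := htle j
  have hTeq : T = 1 - A - a := by
    rw [hT, tsumTail_eq r hrsum hrtot j, Finset.sum_range_succ]; ring_nf; rfl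
  have hTteq : Tt = 1 - At - at' := by
    rw [hTt, tsumTail_eq rt htsum httot j, Finset.sum_range_succ]; ring_nf; rfl
  have hT0 : 0 ≤ T := tsum_nonneg fun m => hr0 _
  have hTt0 : 0 ≤ Tt := tsum_nonneg fun m => ht0 _
  have hT1 : T ≤ 1 := by rw [hTeq]; linarith
  have hTt1 : Tt ≤ 1 := by rw [hTteq]; linarith
  -- abbreviations
  set u := |a - at'| with hu
  set v := |A - At| with hv
  have hu0 : 0 ≤ u := abs_nonneg _
  have hv0 : 0 ≤ v := abs_nonneg _
  -- square-summability of the difference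
  set S := ∑' m, (r m - rt m) ^ 2 with hS
  have hΔsum : Summable (fun m => (r m - rt m) ^ 2) := by
    apply Summable.of_nonneg_of_le (fun m => sq_nonneg _) (fun m => ?_) (hrsum.add htsum)
    have h1 : |r m - rt m| ≤ 1 := by
      rw [abs_le]; constructor <;> linarith [hr0 m, ht0 m, hrle m, htle m]
    have h2 : |r m - rt m| ≤ r m + rt m := by
      rw [abs_le]; constructor <;> linarith [hr0 m, ht0 m]
    calc (r m - rt m) ^ 2 = |r m - rt m| * |r m - rt m| := by rw [← sq_abs]; ring
      _ ≤ 1 * |r m - rt m| := mul_le_mul_of_nonneg_right h1 (abs_nonneg _)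
      _ = |r m - rt m| := one_mul _
      _ ≤ r m + rt m := h2
  have hS0 : 0 ≤ S := tsum_nonneg fun m => sq_nonneg _
  -- Cauchy–Schwarz on the prefix
  have hCS : v ^ 2 ≤ ((j : ℝ) + 1) * S := by
    have h1 : (A - At) = ∑ m ∈ Finset.range j, (r m - rt m) := by
      rw [hA, hAt, Finset.sum_sub_distrib]
    have h2 : (∑ m ∈ Finset.range j, (r m - rt m)) ^ 2
        ≤ (Finset.range j).card * ∑ m ∈ Finset.range j, (r m - rt m) ^ 2 :=
      sq_sum_le_card_mul_sum_sq
    have h3 : ∑ m ∈ Finset.range j, (r m - rt m) ^ 2 ≤ S :=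
      Summable.sum_le_tsum _ (fun m _ => sq_nonneg _) hΔsum
    have h4 : (0 : ℝ) ≤ ∑ m ∈ Finset.range j, (r m - rt m) ^ 2 :=
      Finset.sum_nonneg fun m _ => sq_nonneg _
    have hj : (0 : ℝ) ≤ (j : ℝ) := Nat.cast_nonneg j
    rw [hv, sq_abs, h1]
    simp only [Finset.card_range] at h2
    have h5 := mul_le_mul_of_nonneg_left h3 hj
    linarith
  -- bounds on powers
  have pow01 : ∀ (n : ℕ) (x : ℝ), 0 ≤ x → x ≤ 1 → x ^ n ≤ 1 := fun n x h0 h1 =>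
    pow_le_one₀ h0 h1
  -- pow-difference bounds with constant L
  have hcastL : ∀ n : ℕ, n ≤ L → (n : ℝ) ≤ L := fun n h => by exact_mod_cast h
  have hi₂Le : i₂ ≤ L := le_trans hi₂L (Nat.sub_le _ _)
  have hi₁Le : i₁ ≤ L := le_trans (le_of_lt hi₁) hkL
  have hcLe : c ≤ L := le_trans (Nat.sub_le _ _) (Nat.sub_le _ _)
  have Fu : |a ^ i₂ - at' ^ i₂| ≤ (L : ℝ) * u := by
    have h1 := abs_pow_sub_pow_le' i₂ ha0 ha1 hat0 hat1
    have h2 := hcastL i₂ hi₂Le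
    exact h1.trans (mul_le_mul_of_nonneg_right h2 hu0)
  have Fv : |A ^ i₁ - At ^ i₁| ≤ (L : ℝ) * v := by
    have h1 := abs_pow_sub_pow_le' i₁ hA0 hA1 hAt0 hAt1
    have h2 := hcastL i₁ hi₁Le
    exact h1.trans (mul_le_mul_of_nonneg_right h2 hv0)
  have hTdiff : |T - Tt| ≤ v + u := by
    have h1 : T - Tt = -((A - At) + (a - at')) := by rw [hTeq, hTteq]; ring
    rw [h1, abs_neg]
    exact (abs_add_le _ _).trans (by rw [hu, hv])
  have Fw : |T ^ c - Tt ^ c| ≤ (L : ℝ) * (v + u) := by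
    have h1 := abs_pow_sub_pow_le' c hT0 hT1 hTt0 hTt1
    have h2 := hcastL c hcLe
    have h3 : (c : ℝ) * |T - Tt| ≤ (c : ℝ) * (v + u) :=
      mul_le_mul_of_nonneg_left hTdiff (Nat.cast_nonneg c)
    have h4 : (c : ℝ) * (v + u) ≤ (L : ℝ) * (v + u) :=
      mul_le_mul_of_nonneg_right h2 (by positivity)
    exact h1.trans (h3.trans h4)
  -- splitting R
  have hRsplit : Rfun L j i₁ i₂ r rt
      = (A ^ i₁ * T ^ c) * (a ^ i₂ - at' ^ i₂)
        + ((A ^ i₁ - At ^ i₁) * T ^ c + At ^ i₁ * (T ^ c - Tt ^ c)) * at' ^ i₂ := by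
    simp only [Rfun, ← hA, ← hAt, ← hT, ← hTt, ← ha, ← hat', ← hc]; ring
  have hatpow : at' ^ i₂ ≤ at' := pow_le_of_le_one hat0 hat1 (Nat.one_le_iff_ne_zero.mp hi₂1)
  have hatpow0 : 0 ≤ at' ^ i₂ := pow_nonneg hat0 _
  have hRabs : |Rfun L j i₁ i₂ r rt| ≤ (L : ℝ) * u + at' * ((L : ℝ) * v + (L : ℝ) * (v + u)) := by
    rw [hRsplit]
    have e1 : |(A ^ i₁ * T ^ c) * (a ^ i₂ - at' ^ i₂)| ≤ (L : ℝ) * u := by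
      rw [abs_mul]
      have hX : |A ^ i₁ * T ^ c| ≤ 1 := by
        rw [abs_of_nonneg (mul_nonneg (pow_nonneg hA0 _) (pow_nonneg hT0 _))]
        exact mul_le_one₀ (pow01 _ _ hA0 hA1) (pow_nonneg hT0 _) (pow01 _ _ hT0 hT1)
      calc |A ^ i₁ * T ^ c| * |a ^ i₂ - at' ^ i₂|
          ≤ 1 * |a ^ i₂ - at' ^ i₂| := mul_le_mul_of_nonneg_right hX (abs_nonneg _)
        _ = |a ^ i₂ - at' ^ i₂| := one_mul _
        _ ≤ (L : ℝ) * u := Fu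
    have e2 : |((A ^ i₁ - At ^ i₁) * T ^ c + At ^ i₁ * (T ^ c - Tt ^ c)) * at' ^ i₂|
        ≤ at' * ((L : ℝ) * v + (L : ℝ) * (v + u)) := by
      rw [abs_mul, abs_of_nonneg hatpow0]
      have e3 : |(A ^ i₁ - At ^ i₁) * T ^ c + At ^ i₁ * (T ^ c - Tt ^ c)|
          ≤ (L : ℝ) * v + (L : ℝ) * (v + u) := by
        refine (abs_add_le _ _).trans ?_
        have e4 : |(A ^ i₁ - At ^ i₁) * T ^ c| ≤ (L : ℝ) * v := by
          rw [abs_mul, abs_of_nonneg (pow_nonneg hT0 _)]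
          calc |A ^ i₁ - At ^ i₁| * T ^ c
              ≤ |A ^ i₁ - At ^ i₁| * 1 :=
                mul_le_mul_of_nonneg_left (pow01 c T hT0 hT1) (abs_nonneg _)
            _ = |A ^ i₁ - At ^ i₁| := mul_one _
            _ ≤ (L : ℝ) * v := Fv
        have e5 : |At ^ i₁ * (T ^ c - Tt ^ c)| ≤ (L : ℝ) * (v + u) := by
          rw [abs_mul, abs_of_nonneg (pow_nonneg hAt0 _)]
          calc At ^ i₁ * |T ^ c - Tt ^ c|
              ≤ 1 * |T ^ c - Tt ^ c| :=
                mul_le_mul_of_nonneg_right (pow01 i₁ At hAt0 hAt1) (abs_nonneg _)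
            _ = |T ^ c - Tt ^ c| := one_mul _
            _ ≤ (L : ℝ) * (v + u) := Fw
        linarith
      have hb0 : (0 : ℝ) ≤ (L : ℝ) * v + (L : ℝ) * (v + u) := by positivity
      calc |(A ^ i₁ - At ^ i₁) * T ^ c + At ^ i₁ * (T ^ c - Tt ^ c)| * at' ^ i₂
          ≤ ((L : ℝ) * v + (L : ℝ) * (v + u)) * at' ^ i₂ :=
            mul_le_mul_of_nonneg_right e3 hatpow0
        _ ≤ ((L : ℝ) * v + (L : ℝ) * (v + u)) * at' :=
            mul_le_mul_of_nonneg_left hatpow hb0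
        _ = at' * ((L : ℝ) * v + (L : ℝ) * (v + u)) := by ring
    exact (abs_add_le _ _).trans (by linarith)
  -- squaring
  have hRHS0 : (0 : ℝ) ≤ (L : ℝ) * u + at' * ((L : ℝ) * v + (L : ℝ) * (v + u)) := by positivity
  have hsq : (Rfun L j i₁ i₂ r rt) ^ 2
      ≤ ((L : ℝ) * u + at' * ((L : ℝ) * v + (L : ℝ) * (v + u))) ^ 2 := by
    rw [← sq_abs]
    exact pow_le_pow_left₀ (abs_nonneg _) hRabs 2
  -- core numeric inequality (L-free part)
  have hW0 : (0 : ℝ) ≤ ((j : ℝ) + 1) * S := by positivity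
  have hcore : (u + at' * (2 * v + u)) ^ 2 ≤ 8 * (u ^ 2 + at' * (((j : ℝ) + 1) * S)) :=
    core_ineq hu0 hv0 hat0 hat1 hW0 (by linarith [hCS])
  have hfac : ((L : ℝ) * u + at' * ((L : ℝ) * v + (L : ℝ) * (v + u))) ^ 2
      = (L : ℝ) ^ 2 * (u + at' * (2 * v + u)) ^ 2 := by ring
  have hu2 : u ^ 2 = (a - at') ^ 2 := by rw [hu, sq_abs]
  have hL2 : (0 : ℝ) ≤ (L : ℝ) ^ 2 := sq_nonneg _
  calc (Rfun L j i₁ i₂ r rt) ^ 2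
      ≤ (L : ℝ) ^ 2 * (u + at' * (2 * v + u)) ^ 2 := by rw [← hfac]; exact hsq
    _ ≤ (L : ℝ) ^ 2 * (8 * (u ^ 2 + at' * (((j : ℝ) + 1) * S))) :=
        mul_le_mul_of_nonneg_left hcore hL2
    _ = 8 * (L : ℝ) ^ 2 * ((a - at') ^ 2 + ((j : ℝ) + 1) * at' * S) := by rw [hu2]; ring
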